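/- Let a ≥ 0 and let x, y : ℕ → ℝ satisfy 0 ≤ x_m ≤ a^m and 0 ≤ y_n ≤ a^n for all m, n ∈ ℕ. Then Σ_{ℓ,ℓ′=0}^{∞} (1/(ℓ! ℓ′!)) Σ ((m̃+ñ)!/((m−ℓ)! n! (m̃−ℓ′)! ñ!)) x_{m−1} y_{n−1} ≤ 32 e^{16a}, where the inner sum runs over all (m, n, m̃, ñ) ∈ ℕ⁴ with m ≥ max(ℓ,1), n ≥ 1, m̃ ≥ ℓ′ and m + n = m̃ + ñ (in particular the whole family is summable). -/

import Mathlib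

/-!
Rearranging freely in `ℝ≥0∞`, the constraint `m + n = m̃ + ñ` fixes `ñ`, and the weights become
binomial coefficients: `(m̃+ñ)!/(ℓ'! (m̃-ℓ')! ñ!) = C(N, m̃) C(m̃, ℓ')` with `N = m + n`, and
`1/(ℓ! (m-ℓ)!) = C(m, ℓ)/m!`. Summing `ℓ'` and then `m̃` gives `∑ C(N, m̃) 2^m̃ = 3^N`, and summing
`ℓ` gives `2^m`, so the sum factors as `(∑_{m ≥ 1} 6^m x_{m-1}/m!) (∑_{n ≥ 1} 3^n y_{n-1}/n!)`.
Each factor is at most `c e^{ca}` (`c = 6, 3`), and `18 e^{9a} ≤ 32 e^{16a}`.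
-/

open scoped Nat ENNReal

/-- The summand of Lemma D.6, doubly shifted case: for a sextuple `(ℓ, ℓ', m, n, m̃, ñ)`,
`(1/(ℓ! ℓ'!)) * ((m̃+ñ)! / ((m-ℓ)! n! (m̃-ℓ')! ñ!)) * x (m-1) * y (n-1)`. -/
noncomputable def summandD6shift2 (x y : ℕ → ℝ) : ℕ × ℕ × ℕ × ℕ × ℕ × ℕ → ℝ :=
  fun (l, l', m, n, mt, nt) =>
    1 / ((l.factorial : ℝ) * (l'.factorial : ℝ)) *
      (((mt + nt).factorial : ℝ) /
        (((m - l).factorial : ℝ) * (n.factorial : ℝ) * ((mt - l').factorial : ℝ) *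
          (nt.factorial : ℝ))) * x (m - 1) * y (n - 1)

/-- Index condition: `m ≥ max(ℓ,1)`, `n ≥ 1`, `ℓ' ≤ m̃` and `m + n = m̃ + ñ`. -/
def condD6shift2 : ℕ × ℕ × ℕ × ℕ × ℕ × ℕ → Prop :=
  fun (l, l', m, n, mt, nt) => l ≤ m ∧ 1 ≤ m ∧ 1 ≤ n ∧ l' ≤ mt ∧ m + n = mt + nt

theorem tsum_choose_mul_pow {R : Type*} [CommSemiring R] [TopologicalSpace R] (n : ℕ) (r : R) :
    ∑' k, (n.choose k : R) * r ^ k = (r + 1) ^ n := by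
  rw [tsum_eq_sum (s := Finset.range (n + 1)) fun k hk => by
      rw [Nat.choose_eq_zero_of_lt (by simpa using hk), Nat.cast_zero, zero_mul], add_pow]
  simp only [one_pow, mul_one, mul_comm]

theorem tsum_choose {R : Type*} [CommSemiring R] [TopologicalSpace R] (n : ℕ) :
    ∑' k, (n.choose k : R) = 2 ^ n := by
  simpa [one_add_one_eq_two] using tsum_choose_mul_pow n (1 : R)

theorem summable_and_tsum_le_of_tsum_ofReal_le {ι : Type*} {f : ι → ℝ} {c : ℝ}
    (hf : ∀ i, 0 ≤ f i) (hc : 0 ≤ c) (h : ∑' i, ENNReal.ofReal (f i) ≤ ENNReal.ofReal c) :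
    Summable f ∧ ∑' i, f i ≤ c := by
  have hs : Summable f := by
    simpa only [ENNReal.toReal_ofReal (hf _)] using
      ENNReal.summable_toReal (h.trans_lt ENNReal.ofReal_lt_top).ne
  refine ⟨hs, ?_⟩
  rwa [← ENNReal.ofReal_le_ofReal_iff hc, ENNReal.ofReal_tsum_of_nonneg hf hs]

theorem tsum_ofReal_pow_succ_mul_div_factorial_le {a c : ℝ} (ha : 0 ≤ a) (hc : 0 ≤ c)
    {x : ℕ → ℝ} (hxa : ∀ j, x j ≤ a ^ j) :
    ∑' j, ENNReal.ofReal (c ^ (j + 1) * (x j / (j + 1)!)) ≤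
      ENNReal.ofReal (c * Real.exp (c * a)) := by
  have hexp : HasSum (fun j => c * ((c * a) ^ j / j !)) (c * Real.exp (c * a)) := by
    rw [Real.exp_eq_exp_ℝ]
    exact (NormedSpace.expSeries_div_hasSum_exp (c * a)).mul_left c
  calc ∑' j, ENNReal.ofReal (c ^ (j + 1) * (x j / (j + 1)!))
      ≤ ∑' j, ENNReal.ofReal (c * ((c * a) ^ j / j !)) := by
        refine ENNReal.tsum_le_tsum fun j => ENNReal.ofReal_le_ofReal ?_
        calc c ^ (j + 1) * (x j / (j + 1)!) ≤ c ^ (j + 1) * (a ^ j / j !) := by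
              gcongr
              · exact hxa j
              · exact j.le_succ
          _ = c * ((c * a) ^ j / j !) := by ring
    _ = ENNReal.ofReal (c * Real.exp (c * a)) := by
        rw [← ENNReal.ofReal_tsum_of_nonneg (fun j => by positivity) hexp.summable, hexp.tsum_eq]

theorem summandD6shift2_nonneg {x y : ℕ → ℝ} (hx0 : ∀ m, 0 ≤ x m) (hy0 : ∀ n, 0 ≤ y n)
    (q : ℕ × ℕ × ℕ × ℕ × ℕ × ℕ) : 0 ≤ summandD6shift2 x y q := by
  obtain ⟨l, l', m, n, mt, nt⟩ := q
  have := hx0 (m - 1)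
  have := hy0 (n - 1)
  unfold summandD6shift2
  positivity

theorem summandD6shift2_eq_choose_mul (x y : ℕ → ℝ) {l l' m n mt nt : ℕ} (hl : l ≤ m)
    (hl' : l' ≤ mt) :
    summandD6shift2 x y (l, l', m, n, mt, nt) =
      (m.choose l * ((mt + nt).choose mt * mt.choose l') : ℕ) / (m ! * n ! : ℝ) *
        x (m - 1) * y (n - 1) := by
  simp only [summandD6shift2]
  push_cast
  rw [Nat.cast_choose ℝ hl, Nat.cast_choose ℝ (Nat.le_add_right mt nt), Nat.cast_choose ℝ hl',
    Nat.add_sub_cancel_left]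
  field_simp

def reindexD6shift2 : ℕ × ℕ × ℕ × ℕ × ℕ → ℕ × ℕ × ℕ × ℕ × ℕ × ℕ :=
  fun (j, k, l, mt, l') => (l, l', j + 1, k + 1, mt, j + k + 2 - mt)

theorem reindexD6shift2_injective : Function.Injective reindexD6shift2 := by
  rintro ⟨j, k, l, mt, l'⟩ ⟨j₂, k₂, l₂, mt₂, l'₂⟩ h
  simp only [reindexD6shift2, Prod.mk.injEq, Nat.add_right_cancel_iff] at h
  obtain ⟨rfl, rfl, rfl, rfl, rfl, -⟩ := h
  rfl

theorem setOf_condD6shift2_subset_range : {q | condD6shift2 q} ⊆ Set.range reindexD6shift2 := by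
  rintro ⟨l, l', m, n, mt, nt⟩ ⟨hl, hm, hn, hl', hsum⟩
  refine ⟨(m - 1, n - 1, l, mt, l'), ?_⟩
  simp only [reindexD6shift2, Prod.mk.injEq, true_and]
  omega

theorem indicator_ofReal_summandD6shift2_reindex {x y : ℕ → ℝ} (hx0 : ∀ m, 0 ≤ x m)
    (hy0 : ∀ n, 0 ≤ y n) (j k l mt l' : ℕ) :
    {q | condD6shift2 q}.indicator (fun q => ENNReal.ofReal (summandD6shift2 x y q))
        (reindexD6shift2 (j, k, l, mt, l')) =
      ENNReal.ofReal (x j / (j + 1)!) * ENNReal.ofReal (y k / (k + 1)!) *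
        (((j + 1).choose l * ((j + k + 2).choose mt * mt.choose l') : ℕ) : ℝ≥0∞) := by
  by_cases h : reindexD6shift2 (j, k, l, mt, l') ∈ {q | condD6shift2 q}
  · rw [Set.indicator_of_mem h]
    obtain ⟨hl, -, -, hl', hsum⟩ := h
    simp only [reindexD6shift2] at hl hl' hsum ⊢
    rw [summandD6shift2_eq_choose_mul x y hl hl', ← hsum,
      show j + 1 + (k + 1) = j + k + 2 by ring, Nat.add_sub_cancel, Nat.add_sub_cancel,
      ← ENNReal.ofReal_natCast, ← ENNReal.ofReal_mul, ← ENNReal.ofReal_mul]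
    · congr 1
      ring
    all_goals have := hx0 j; have := hy0 k; positivity
  · rw [Set.indicator_of_notMem h]
    simp only [Set.mem_ofPred_eq, condD6shift2, reindexD6shift2] at h
    -- off the index set (e.g. where `j + k + 2 - m̃` truncates) a binomial coefficient vanishes
    have : j + 1 < l ∨ mt < l' ∨ j + k + 2 < mt := by omega
    rcases this with h | h | h <;> simp [Nat.choose_eq_zero_of_lt h]

theorem tsum_ofReal_summandD6shift2 {x y : ℕ → ℝ} (hx0 : ∀ m, 0 ≤ x m) (hy0 : ∀ n, 0 ≤ y n) :
    ∑' q : {q // condD6shift2 q}, ENNReal.ofReal (summandD6shift2 x y q) =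
      (∑' j, ENNReal.ofReal (6 ^ (j + 1) * (x j / (j + 1)!))) *
        ∑' k, ENNReal.ofReal (3 ^ (k + 1) * (y k / (k + 1)!)) := by
  refine (tsum_subtype {q | condD6shift2 q}
    (fun q => ENNReal.ofReal (summandD6shift2 x y q))).trans ?_
  rw [← reindexD6shift2_injective.tsum_eq
      ((Set.support_indicator_subset).trans setOf_condD6shift2_subset_range)]
  simp only [ENNReal.tsum_prod', indicator_ofReal_summandD6shift2_reindex hx0 hy0, Nat.cast_mul,
    ENNReal.tsum_mul_left, ENNReal.tsum_mul_right, tsum_choose, tsum_choose_mul_pow,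
    two_add_one_eq_three]
  rw [← ENNReal.tsum_mul_right]
  simp only [← ENNReal.tsum_mul_left]
  refine tsum_congr fun j => tsum_congr fun k => ?_
  rw [ENNReal.ofReal_mul (by positivity), ENNReal.ofReal_mul (by positivity),
    ENNReal.ofReal_pow (by norm_num), ENNReal.ofReal_pow (by norm_num), ENNReal.ofReal_ofNat,
    ENNReal.ofReal_ofNat, show (6 : ℝ≥0∞) = 2 * 3 by norm_num, mul_pow]
  ring

/-- Lemma D.6 ('summation-ell'), doubly shifted case: if `0 ≤ x m ≤ a^m` and
`0 ≤ y n ≤ a^n`, then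
`∑_{ℓ,ℓ'} (1/(ℓ! ℓ'!)) ∑ ((m̃+ñ)!/((m-ℓ)! n! (m̃-ℓ')! ñ!)) x_{m-1} y_{n-1} ≤ 32 e^{16a}`,
the inner sum over `(m, n, m̃, ñ)` with `m ≥ max(ℓ,1)`, `n ≥ 1`, `m̃ ≥ ℓ'` and
`m + n = m̃ + ñ`. -/
theorem summation_ell_lemma_shift2 (a : ℝ) (ha : 0 ≤ a) (x y : ℕ → ℝ)
    (hx0 : ∀ m, 0 ≤ x m) (hxa : ∀ m, x m ≤ a ^ m)
    (hy0 : ∀ n, 0 ≤ y n) (hya : ∀ n, y n ≤ a ^ n) :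
    Summable (fun q : {q : ℕ × ℕ × ℕ × ℕ × ℕ × ℕ // condD6shift2 q} =>
      summandD6shift2 x y q.1) ∧
    ∑' q : {q : ℕ × ℕ × ℕ × ℕ × ℕ × ℕ // condD6shift2 q},
      summandD6shift2 x y q.1 ≤ 32 * Real.exp (16 * a) := by
  refine summable_and_tsum_le_of_tsum_ofReal_le (fun q => summandD6shift2_nonneg hx0 hy0 q.1)
    (by positivity) ?_
  rw [tsum_ofReal_summandD6shift2 hx0 hy0]
  calc _ ≤ ENNReal.ofReal (6 * Real.exp (6 * a)) * ENNReal.ofReal (3 * Real.exp (3 * a)) :=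
        mul_le_mul' (tsum_ofReal_pow_succ_mul_div_factorial_le ha (by norm_num) hxa)
          (tsum_ofReal_pow_succ_mul_div_factorial_le ha (by norm_num) hya)
    _ = ENNReal.ofReal (18 * Real.exp (9 * a)) := by
        rw [← ENNReal.ofReal_mul (by positivity), show 9 * a = 6 * a + 3 * a by ring,
          Real.exp_add]
        congr 1
        ring
    _ ≤ ENNReal.ofReal (32 * Real.exp (16 * a)) := by
        gcongr
        · norm_num
        · linarith
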